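/- (Key identity in the proof of Theorem 2, giving Theorem 2(iii).) Under assumption A1 with parameter θ ≥ 0, the identity ∑_{x∈S} η*(x)·u*(x) = ∑_{n≥1} n·e^{θn}·f_n(z) holds in [0, ∞], where u*(x) = ∑_{n≥1} e^{θn}·f_n(x) and η*(y) = ∑_{j≥0} e^{θj}·g_j(y). In particular, if additionally assumption A2 holds, then ∑_{x∈S} η*(x)·u*(x) < ∞. -/

import Mathlib

set_option linter.unusedSectionVars false
open scoped ENNReal NNReal


/-- Matrix powers: `B^0 = I`, `B^{n+1}(x,y) = ∑_w B^n(x,w) B(w,y)`. -/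
noncomputable def matPow {S : Type*} [DecidableEq S] (B : S → S → ℝ) : ℕ → S → S → ℝ
  | 0 => fun x y => if x = y then (1 : ℝ) else 0
  | n + 1 => fun x y => ∑' w, matPow B n x w * B w y

/-- First-return quantities: `fret B z n x` is the probability that the killed chain
with sub-stochastic transition matrix `B`, started at `x`, first hits `z` at time `n`
without having been killed: `f_1(x) = B(x,z)`, `f_{n+1}(x) = ∑_{w ≠ z} B(x,w) f_n(w)`.
(The value at `n = 0` is set to `0` by convention.) -/
noncomputable def fret {S : Type*} [DecidableEq S] (B : S → S → ℝ) (z : S) : ℕ → S → ℝ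
  | 0 => fun _ => 0
  | 1 => fun x => B x z
  | n + 2 => fun x => ∑' w, if w = z then 0 else B x w * fret B z (n + 1) w

/-- `grow B z j y` is the probability that the killed chain started at `z` is at `y`
at time `j` without having been killed or having returned to `z`:
`g_0 = δ_z`, and for `j ≥ 1`, `g_j(z) = 0` and `g_j(y) = ∑_x g_{j-1}(x) B(x,y)` for `y ≠ z`. -/
noncomputable def grow {S : Type*} [DecidableEq S] (B : S → S → ℝ) (z : S) : ℕ → S → ℝ
  | 0 => fun y => if y = z then 1 else 0
  | j + 1 => fun y => if y = z then 0 else ∑' x, grow B z j x * B x y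

/-- The Perron-Frobenius column eigenvector candidate
`u*(x) = ∑_{n ≥ 1} e^{θ n} f_n(x)`. -/
noncomputable def uStar {S : Type*} [DecidableEq S] (B : S → S → ℝ) (z : S) (θ : ℝ)
    (x : S) : ℝ :=
  ∑' n : ℕ, Real.exp (θ * ((n : ℝ) + 1)) * fret B z (n + 1) x

/-- The Perron-Frobenius row eigenvector candidate
`η*(y) = ∑_{j ≥ 0} e^{θ j} g_j(y)`. -/
noncomputable def etaStar {S : Type*} [DecidableEq S] (B : S → S → ℝ) (z : S) (θ : ℝ)
    (y : S) : ℝ :=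
  ∑' j : ℕ, Real.exp (θ * (j : ℝ)) * grow B z j y

section Aux

variable {S : Type*} [Countable S] [DecidableEq S] (B : S → S → ℝ) (z : S)
variable (hnn : ∀ x y, 0 ≤ B x y) (hrow : ∀ x, Summable (fun y => B x y))
  (hsub : ∀ x, ∑' y, B x y ≤ 1)

include hnn hrow hsub

lemma B_le_one : ∀ x y, B x y ≤ 1 := fun x y =>
  le_trans (Summable.le_tsum (hrow x) y (fun j _ => hnn x j)) (hsub x)

omit hrow hsub in
lemma fret_nonneg : ∀ n x, 0 ≤ fret B z (n + 1) x := by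
  intro n
  induction n with
  | zero => intro x; exact hnn x z
  | succ n ih =>
    intro x
    show 0 ≤ ∑' w, if w = z then 0 else B x w * fret B z (n + 1) w
    refine tsum_nonneg fun w => ?_
    split
    · exact le_rfl
    · exact mul_nonneg (hnn x w) (ih w)

lemma fret_le_one : ∀ n x, fret B z (n + 1) x ≤ 1 := by
  intro n
  induction n with
  | zero => intro x; exact B_le_one B hnn hrow hsub x z
  | succ n ih =>
    intro x
    have hterm : ∀ w, (if w = z then 0 else B x w * fret B z (n + 1) w) ≤ B x w := by
      intro w
      split
      · exact hnn x w
      · calc B x w * fret B z (n + 1) w ≤ B x w * 1 :=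
              mul_le_mul_of_nonneg_left (ih w) (hnn x w)
          _ = B x w := mul_one _
    have hnn' : ∀ w, 0 ≤ (if w = z then 0 else B x w * fret B z (n + 1) w) := by
      intro w; split
      · exact le_rfl
      · exact mul_nonneg (hnn x w) (fret_nonneg B z hnn n w)
    have hs : Summable (fun w => if w = z then 0 else B x w * fret B z (n + 1) w) :=
      Summable.of_nonneg_of_le hnn' hterm (hrow x)
    show (∑' w, if w = z then 0 else B x w * fret B z (n + 1) w) ≤ 1
    exact le_trans (Summable.tsum_le_tsum hterm hs (hrow x)) (hsub x)

lemma fret_term_summable (n : ℕ) (x : S) :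
    Summable (fun w => if w = z then 0 else B x w * fret B z (n + 1) w) := by
  refine Summable.of_nonneg_of_le (fun w => ?_) (fun w => ?_) (hrow x)
  · split
    · exact le_rfl
    · exact mul_nonneg (hnn x w) (fret_nonneg B z hnn n w)
  · split
    · exact hnn x w
    · calc B x w * fret B z (n + 1) w ≤ B x w * 1 :=
            mul_le_mul_of_nonneg_left (fret_le_one B z hnn hrow hsub n w) (hnn x w)
        _ = B x w := mul_one _

lemma fret_ofReal_succ (n : ℕ) (x : S) :
    ENNReal.ofReal (fret B z (n + 2) x) =
      ∑' w, if w = z then 0 else ENNReal.ofReal (B x w) * ENNReal.ofReal (fret B z (n + 1) w) := by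
  have h1 : fret B z (n + 2) x = ∑' w, if w = z then 0 else B x w * fret B z (n + 1) w := rfl
  rw [h1, ENNReal.ofReal_tsum_of_nonneg (fun w => ?_) (fret_term_summable B z hnn hrow hsub n x)]
  · refine tsum_congr fun w => ?_
    split
    · simp
    · exact ENNReal.ofReal_mul (hnn x w)
  · split
    · exact le_rfl
    · exact mul_nonneg (hnn x w) (fret_nonneg B z hnn n w)

omit hrow hsub in
lemma grow_nonneg : ∀ j y, 0 ≤ grow B z j y := by
  intro j
  induction j with
  | zero => intro y; show (0:ℝ) ≤ if y = z then 1 else 0; split <;> norm_num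
  | succ j ih =>
    intro y
    show (0:ℝ) ≤ if y = z then 0 else ∑' x, grow B z j x * B x y
    split
    · exact le_rfl
    · exact tsum_nonneg fun x => mul_nonneg (ih x) (hnn x y)

omit hnn hrow hsub in
lemma real_summable_of_ofReal {f : S → ℝ} (hf : ∀ x, 0 ≤ f x)
    (h : ∑' x, ENNReal.ofReal (f x) ≠ ⊤) : Summable f := by
  refine (ENNReal.summable_toReal h).congr fun x => ?_
  exact ENNReal.toReal_ofReal (hf x)

lemma grow_mul_summable_of {j : ℕ}
    (hm : ∑' x, ENNReal.ofReal (grow B z j x) ≤ 1) (y : S) :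
    Summable (fun x => grow B z j x * B x y) := by
  refine real_summable_of_ofReal (fun x => mul_nonneg (grow_nonneg B z hnn j x) (hnn x y)) ?_
  have hle : ∑' x, ENNReal.ofReal (grow B z j x * B x y) ≤ ∑' x, ENNReal.ofReal (grow B z j x) := by
    refine ENNReal.tsum_le_tsum fun x => ENNReal.ofReal_le_ofReal ?_
    calc grow B z j x * B x y ≤ grow B z j x * 1 :=
          mul_le_mul_of_nonneg_left (B_le_one B hnn hrow hsub x y) (grow_nonneg B z hnn j x)
      _ = grow B z j x := mul_one _
  exact ne_top_of_le_ne_top (by simp) (le_trans hle hm)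

lemma grow_ofReal_succ_of {j : ℕ}
    (hm : ∑' x, ENNReal.ofReal (grow B z j x) ≤ 1) (y : S) :
    ENNReal.ofReal (grow B z (j + 1) y) =
      if y = z then 0 else ∑' x, ENNReal.ofReal (grow B z j x) * ENNReal.ofReal (B x y) := by
  have h1 : grow B z (j + 1) y = if y = z then 0 else ∑' x, grow B z j x * B x y := rfl
  rw [h1]
  split
  · simp
  · rw [ENNReal.ofReal_tsum_of_nonneg (fun x => mul_nonneg (grow_nonneg B z hnn j x) (hnn x y))
      (grow_mul_summable_of B z hnn hrow hsub hm y)]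
    exact tsum_congr fun x => ENNReal.ofReal_mul (grow_nonneg B z hnn j x)

lemma B_tail_le_one (x : S) :
    (∑' y, if y = z then 0 else ENNReal.ofReal (B x y)) ≤ 1 := by
  calc (∑' y, if y = z then 0 else ENNReal.ofReal (B x y))
      ≤ ∑' y, ENNReal.ofReal (B x y) := by
        refine ENNReal.tsum_le_tsum fun y => ?_
        split
        · exact zero_le
        · exact le_rfl
    _ = ENNReal.ofReal (∑' y, B x y) :=
        (ENNReal.ofReal_tsum_of_nonneg (hnn x) (hrow x)).symm
    _ ≤ 1 := ENNReal.ofReal_le_one.mpr (hsub x)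

lemma gmass : ∀ j, ∑' x, ENNReal.ofReal (grow B z j x) ≤ 1 := by
  intro j
  induction j with
  | zero =>
    have : ∀ y : S, ENNReal.ofReal (grow B z 0 y) = if y = z then 1 else 0 := by
      intro y
      show ENNReal.ofReal (if y = z then 1 else 0) = _
      split <;> simp
    rw [tsum_congr this, tsum_ite_eq]
  | succ j ih =>
    calc ∑' y, ENNReal.ofReal (grow B z (j + 1) y)
        = ∑' y, ∑' x, (if y = z then 0 else
            ENNReal.ofReal (grow B z j x) * ENNReal.ofReal (B x y)) := by
          refine tsum_congr fun y => ?_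
          rw [grow_ofReal_succ_of B z hnn hrow hsub ih y]
          split
          · simp
          · rfl
      _ = ∑' x, ∑' y, (if y = z then 0 else
            ENNReal.ofReal (grow B z j x) * ENNReal.ofReal (B x y)) := ENNReal.tsum_comm
      _ = ∑' x, ENNReal.ofReal (grow B z j x) *
            ∑' y, (if y = z then 0 else ENNReal.ofReal (B x y)) := by
          refine tsum_congr fun x => ?_
          rw [← ENNReal.tsum_mul_left]
          refine tsum_congr fun y => ?_
          split <;> simp
      _ ≤ ∑' x, ENNReal.ofReal (grow B z j x) * 1 := by
          refine ENNReal.tsum_le_tsum fun x => ?_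
          exact mul_le_mul_right (B_tail_le_one B z hnn hrow hsub x) _
      _ = ∑' x, ENNReal.ofReal (grow B z j x) := by simp
      _ ≤ 1 := ih

lemma grow_ofReal_succ (j : ℕ) (y : S) :
    ENNReal.ofReal (grow B z (j + 1) y) =
      if y = z then 0 else ∑' x, ENNReal.ofReal (grow B z j x) * ENNReal.ofReal (B x y) :=
  grow_ofReal_succ_of B z hnn hrow hsub (gmass B z hnn hrow hsub j) y

/-- Key convolution identity. -/
lemma key_conv : ∀ j n, (∑' x, ENNReal.ofReal (grow B z j x) * ENNReal.ofReal (fret B z (n + 1) x))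
    = ENNReal.ofReal (fret B z (n + 1 + j) z) := by
  intro j
  induction j with
  | zero =>
    intro n
    have h : ∀ x : S, ENNReal.ofReal (grow B z 0 x) * ENNReal.ofReal (fret B z (n + 1) x)
        = if x = z then ENNReal.ofReal (fret B z (n + 1) z) else 0 := by
      intro x
      show ENNReal.ofReal (if x = z then 1 else 0) * _ = _
      by_cases hx : x = z <;> simp [hx]
    rw [tsum_congr h, tsum_ite_eq]
  | succ j ih =>
    intro n
    calc (∑' y, ENNReal.ofReal (grow B z (j + 1) y) * ENNReal.ofReal (fret B z (n + 1) y))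
        = ∑' y, ∑' x, (if y = z then 0 else
            ENNReal.ofReal (grow B z j x) * ENNReal.ofReal (B x y)
              * ENNReal.ofReal (fret B z (n + 1) y)) := by
          refine tsum_congr fun y => ?_
          rw [grow_ofReal_succ B z hnn hrow hsub j y]
          split
          · simp
          · rw [← ENNReal.tsum_mul_right]
      _ = ∑' x, ENNReal.ofReal (grow B z j x) * ∑' y, (if y = z then 0 else
            ENNReal.ofReal (B x y) * ENNReal.ofReal (fret B z (n + 1) y)) := by
          rw [ENNReal.tsum_comm]
          refine tsum_congr fun x => ?_
          rw [← ENNReal.tsum_mul_left]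
          refine tsum_congr fun y => ?_
          split
          · simp
          · ring
      _ = ∑' x, ENNReal.ofReal (grow B z j x) * ENNReal.ofReal (fret B z (n + 2) x) := by
          refine tsum_congr fun x => ?_
          rw [fret_ofReal_succ B z hnn hrow hsub n x]
      _ = ENNReal.ofReal (fret B z (n + 1 + 1 + j) z) := ih (n + 1)
      _ = ENNReal.ofReal (fret B z (n + 1 + (j + 1)) z) := by ring_nf

end Aux

/-- Counting: `∑' n, h (n + j) = ∑' m, if j ≤ m then h m else 0`. -/
lemma tsum_shift (h : ℕ → ℝ≥0∞) (j : ℕ) :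
    (∑' n : ℕ, h (n + j)) = ∑' m : ℕ, if j ≤ m then h m else 0 := by
  have hinj : Function.Injective (fun n : ℕ => n + j) := fun a b hab => by
    simpa using hab
  have hsupp : Function.support (fun m => if j ≤ m then h m else 0) ⊆
      Set.range (fun n : ℕ => n + j) := by
    intro x hx
    rcases le_or_gt j x with hle | hlt
    · exact ⟨x - j, by show x - j + j = x; omega⟩
    · exfalso
      apply hx
      simp [show ¬ j ≤ x by omega]
  rw [← hinj.tsum_eq hsupp]
  refine tsum_congr fun n => ?_
  simp

lemma tsum_count (h : ℕ → ℝ≥0∞) :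
    (∑' j : ℕ, ∑' n : ℕ, h (j + n)) = ∑' m : ℕ, ((m : ℝ≥0∞) + 1) * h m := by
  calc (∑' j : ℕ, ∑' n : ℕ, h (j + n))
      = ∑' j : ℕ, ∑' m : ℕ, (if j ≤ m then h m else 0) := by
        refine tsum_congr fun j => ?_
        rw [← tsum_shift h j]
        refine tsum_congr fun n => by rw [Nat.add_comm]
    _ = ∑' m : ℕ, ∑' j : ℕ, (if j ≤ m then h m else 0) := ENNReal.tsum_comm
    _ = ∑' m : ℕ, ((m : ℝ≥0∞) + 1) * h m := by
        refine tsum_congr fun m => ?_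
        rw [tsum_eq_sum (s := Finset.range (m + 1)) (fun b hb => by
          simp only [Finset.mem_range] at hb
          have : ¬ b ≤ m := by omega
          simp [this])]
        have : ∀ b ∈ Finset.range (m + 1), (if b ≤ m then h m else 0) = h m := by
          intro b hb
          simp only [Finset.mem_range] at hb
          simp [Nat.lt_succ_iff.mp hb]
        rw [Finset.sum_congr rfl this, Finset.sum_const, Finset.card_range, nsmul_eq_mul]
        push_cast
        ring


/-- Key identity in the proof of Theorem 2 (giving Theorem 2(iii)): under A1,
`∑_x η*(x) u*(x) = ∑_{n ≥ 1} n e^{θ n} f_n(z)` holds in `[0,∞]`; in particular,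
under A2 the left side is finite. -/
theorem stmt8 {S : Type*} [Countable S] [Nonempty S] [DecidableEq S]
    (B : S → S → ℝ)
    (hnn : ∀ x y, 0 ≤ B x y)
    (hrow : ∀ x, Summable (fun y => B x y))
    (hsub : ∀ x, ∑' y, B x y ≤ 1)
    (hirr : ∀ x y, ∃ n, 1 ≤ n ∧ 0 < matPow B n x y)
    (z : S) (θ : ℝ) (hθ : 0 ≤ θ)
    (hA1 : ∑' n : ℕ, Real.exp (θ * ((n : ℝ) + 1)) * fret B z (n + 1) z = 1) :
    (∑' x : S,
        (∑' j : ℕ, ENNReal.ofReal (Real.exp (θ * (j : ℝ)) * grow B z j x)) *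
        (∑' n : ℕ, ENNReal.ofReal (Real.exp (θ * ((n : ℝ) + 1)) * fret B z (n + 1) x)))
      = ∑' n : ℕ, ENNReal.ofReal
          (((n : ℝ) + 1) * Real.exp (θ * ((n : ℝ) + 1)) * fret B z (n + 1) z) ∧
    (Summable (fun n : ℕ =>
        ((n : ℝ) + 1) * Real.exp (θ * ((n : ℝ) + 1)) * fret B z (n + 1) z) →
      (∑' x : S,
        (∑' j : ℕ, ENNReal.ofReal (Real.exp (θ * (j : ℝ)) * grow B z j x)) *
        (∑' n : ℕ, ENNReal.ofReal (Real.exp (θ * ((n : ℝ) + 1)) * fret B z (n + 1) x)))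
        < ⊤) := by
  set E : ℕ → ℝ≥0∞ := fun j => ENNReal.ofReal (Real.exp (θ * (j : ℝ))) with hE
  set E' : ℕ → ℝ≥0∞ := fun n => ENNReal.ofReal (Real.exp (θ * ((n : ℝ) + 1))) with hE'
  set G : ℕ → S → ℝ≥0∞ := fun j x => ENNReal.ofReal (grow B z j x) with hG
  set F : ℕ → S → ℝ≥0∞ := fun n x => ENNReal.ofReal (fret B z (n + 1) x) with hF
  set h : ℕ → ℝ≥0∞ := fun m => E' m * ENNReal.ofReal (fret B z (m + 1) z) with hh
  have hEE : ∀ j n : ℕ, E j * E' n = E' (j + n) := by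
    intro j n
    rw [hE, hE']
    rw [← ENNReal.ofReal_mul (Real.exp_nonneg _), ← Real.exp_add]
    congr 2
    push_cast
    ring
  have key : (∑' x : S,
        (∑' j : ℕ, ENNReal.ofReal (Real.exp (θ * (j : ℝ)) * grow B z j x)) *
        (∑' n : ℕ, ENNReal.ofReal (Real.exp (θ * ((n : ℝ) + 1)) * fret B z (n + 1) x)))
      = ∑' n : ℕ, ENNReal.ofReal
          (((n : ℝ) + 1) * Real.exp (θ * ((n : ℝ) + 1)) * fret B z (n + 1) z) := by
    calc (∑' x : S,
        (∑' j : ℕ, ENNReal.ofReal (Real.exp (θ * (j : ℝ)) * grow B z j x)) *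
        (∑' n : ℕ, ENNReal.ofReal (Real.exp (θ * ((n : ℝ) + 1)) * fret B z (n + 1) x)))
        = ∑' x : S, ∑' j : ℕ, ∑' n : ℕ, (E j * G j x) * (E' n * F n x) := by
          refine tsum_congr fun x => ?_
          have h1 : (∑' j : ℕ, ENNReal.ofReal (Real.exp (θ * (j : ℝ)) * grow B z j x))
              = ∑' j : ℕ, E j * G j x :=
            tsum_congr fun j => ENNReal.ofReal_mul (Real.exp_nonneg _)
          have h2 : (∑' n : ℕ, ENNReal.ofReal (Real.exp (θ * ((n : ℝ) + 1)) * fret B z (n + 1) x))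
              = ∑' n : ℕ, E' n * F n x :=
            tsum_congr fun n => ENNReal.ofReal_mul (Real.exp_nonneg _)
          rw [h1, h2, ← ENNReal.tsum_mul_right]
          exact tsum_congr fun j => (ENNReal.tsum_mul_left).symm
      _ = ∑' j : ℕ, ∑' n : ℕ, ∑' x : S, (E j * G j x) * (E' n * F n x) := by
          rw [ENNReal.tsum_comm]
          exact tsum_congr fun j => ENNReal.tsum_comm
      _ = ∑' j : ℕ, ∑' n : ℕ, (E j * E' n) * ∑' x : S, G j x * F n x := by
          refine tsum_congr fun j => tsum_congr fun n => ?_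
          rw [← ENNReal.tsum_mul_left]
          exact tsum_congr fun x => by ring
      _ = ∑' j : ℕ, ∑' n : ℕ, h (j + n) := by
          refine tsum_congr fun j => tsum_congr fun n => ?_
          rw [key_conv B z hnn hrow hsub j n, hEE j n, hh]
          have : n + 1 + j = j + n + 1 := by omega
          rw [this]
      _ = ∑' m : ℕ, ((m : ℝ≥0∞) + 1) * h m := tsum_count h
      _ = ∑' n : ℕ, ENNReal.ofReal
          (((n : ℝ) + 1) * Real.exp (θ * ((n : ℝ) + 1)) * fret B z (n + 1) z) := by
          refine tsum_congr fun m => ?_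
          rw [ENNReal.ofReal_mul (by positivity), ENNReal.ofReal_mul (by positivity)]
          have hc : ENNReal.ofReal ((m : ℝ) + 1) = (m : ℝ≥0∞) + 1 := by
            rw [show ((m : ℝ) + 1) = ((m + 1 : ℕ) : ℝ) by push_cast; ring,
              ENNReal.ofReal_natCast]
            push_cast
            ring
          rw [hc, hh, hE']
          ring
  refine ⟨key, fun hsummable => ?_⟩
  rw [key, ← ENNReal.ofReal_tsum_of_nonneg (fun n => ?_) hsummable]
  · exact ENNReal.ofReal_lt_top
  · exact mul_nonneg (mul_nonneg (by positivity) (Real.exp_nonneg _))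
      (fret_nonneg B z hnn n z)
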